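/- Let {X_n} be i.i.d. random variables and ρ₂ = sup{r ≥ 0 : liminf_{x→∞} x^r P(X > x) = 0}. If 0 ≤ ρ₂ < ∞, then there exists an increasing sequence of positive integers {m_n} such that (log max_{1≤k≤m_n} X_k)/(log m_n) → 1/ρ₂ almost surely. -/

import Mathlib

/-!
Write `ρ = ρ₂` and `F̄(x) = P(X > x)`. If `ρ < s < s'`, then `x ^ s F̄(x)` is eventually bounded
below, so `P(max_{k<m} X_k ≤ m ^ (1/s')) ≤ exp (-c m ^ (1 - s/s'))` tends to `0` along all `m`.
If `liminf x ^ r F̄(x) = 0`, there are arbitrarily large `x` with `x ^ r F̄(x)` small, and for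
`m = ⌈x ^ r⌉` the union bound makes `P(max_{k<m} X_k > x)` small. Picking at stage `k` an `m_k`
where both probabilities are below `2 ^ (-k)`, with `s'_k ↓ ρ` and `r_k ↑ ρ`, Borel–Cantelli
squeezes `Log (max_{k<m_k} X_k) / Log m_k` between `1 / s'_k` and `1 / r_k`.
-/

open MeasureTheory ProbabilityTheory Filter
open scoped ENNReal

/-- `log x = ln (e ∨ x)` as in the paper. -/
noncomputable def Log (x : ℝ) : ℝ := Real.log (max (Real.exp 1) x)

/-- `pmax X n ω = max_{1 ≤ k ≤ n} X_k(ω)` (indexed `0,…,n-1`), junk value at `n = 0`. -/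
noncomputable def pmax {Ω : Type*} (X : ℕ → Ω → ℝ) (n : ℕ) (ω : Ω) : ℝ :=
  if h : n = 0 then X 0 ω
  else (Finset.range n).sup' (Finset.nonempty_range_iff.mpr h) fun k => X k ω

open Real Set Topology

lemma Log_pos (x : ℝ) : 0 < Log x :=
  log_pos ((one_lt_exp_iff.2 one_pos).trans_le (le_max_left _ _))

lemma Log_mono : Monotone Log := fun _ _ hxy =>
  log_le_log ((exp_pos 1).trans_le (le_max_left _ _)) (max_le_max le_rfl hxy)

lemma mul_Log_le_Log_rpow {x : ℝ} (hx : exp 1 ≤ x) (a : ℝ) : a * Log x ≤ Log (x ^ a) := by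
  have hx0 : 0 < x := (exp_pos 1).trans_le hx
  rw [Log, max_eq_right hx, ← log_rpow hx0]
  exact log_le_log (rpow_pos_of_pos hx0 a) (le_max_right _ _)

lemma exists_mul_rpow_neg_le_of_liminf_ne_zero {G : ℝ → ℝ≥0∞} {s : ℝ}
    (h : liminf (fun x => ENNReal.ofReal (x ^ s) * G x) atTop ≠ 0) :
    ∃ c > 0, ∀ᶠ y in atTop, ENNReal.ofReal (c * y ^ (-s)) ≤ G y := by
  obtain ⟨ε, hε0, hεL⟩ := exists_between (pos_iff_ne_zero.2 h)
  have hεtop : ε ≠ ∞ := hεL.ne_top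
  refine ⟨ε.toReal, ENNReal.toReal_pos hε0.ne' hεtop, ?_⟩
  filter_upwards [eventually_lt_of_lt_liminf hεL, eventually_gt_atTop 0] with y hy hy0
  have hys : 0 < y ^ s := rpow_pos_of_pos hy0 s
  rw [ENNReal.ofReal_mul ENNReal.toReal_nonneg, ENNReal.ofReal_toReal hεtop, Real.rpow_neg hy0.le,
    ENNReal.ofReal_inv_of_pos hys, ← div_eq_mul_inv]
  exact ENNReal.div_le_of_le_mul (by rw [mul_comm]; exact hy.le)

lemma tendsto_measure_gt_atTop {Ω : Type*} [MeasurableSpace Ω] {μ : Measure Ω} [IsFiniteMeasure μ]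
    {Y : Ω → ℝ} (hY : AEMeasurable Y μ) :
    Tendsto (fun x => μ {ω | Y ω > x}) atTop (𝓝 0) := by
  have hempty : ⋂ x : ℝ, {ω | Y ω > x} = ∅ :=
    eq_empty_of_forall_notMem fun ω hω => lt_irrefl (Y ω) (mem_iInter.1 hω (Y ω))
  simpa [Function.comp_def, hempty] using tendsto_measure_iInter_atTop
    (s := fun x : ℝ => {ω | Y ω > x}) (fun x => hY.nullMeasurableSet_preimage measurableSet_Ioi)
    (fun _ _ hxy _ h => hxy.trans_lt h) ⟨0, measure_ne_top μ _⟩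

lemma measure_le_le_ofReal_exp_neg {Ω : Type*} [MeasurableSpace Ω] {μ : Measure Ω}
    [IsProbabilityMeasure μ] {Y : Ω → ℝ} (hY : AEMeasurable Y μ) {y t : ℝ} (ht : 0 ≤ t)
    (h : ENNReal.ofReal t ≤ μ {ω | Y ω > y}) :
    μ {ω | Y ω ≤ y} ≤ ENNReal.ofReal (exp (-t)) := by
  have hcompl : {ω | Y ω ≤ y} = {ω | Y ω > y}ᶜ := by ext; simp
  calc μ {ω | Y ω ≤ y} = 1 - μ {ω | Y ω > y} := by
        rw [hcompl]
        exact prob_compl_eq_one_sub₀ (hY.nullMeasurableSet_preimage measurableSet_Ioi)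
    _ ≤ 1 - ENNReal.ofReal t := tsub_le_tsub_left h 1
    _ = ENNReal.ofReal (1 - t) := by rw [ENNReal.ofReal_sub 1 ht, ENNReal.ofReal_one]
    _ ≤ ENNReal.ofReal (exp (-t)) := ENNReal.ofReal_le_ofReal (by linarith [add_one_le_exp (-t)])

lemma exists_strictMono_ae_eventually_notMem {Ω : Type*} [MeasurableSpace Ω] {μ : Measure Ω}
    {B : ℕ → ℕ → Set Ω} {p : ℕ → Prop} (h : ∀ k, ∃ᶠ m in atTop, p m ∧ μ (B k m) < 2⁻¹ ^ k) :
    ∃ φ : ℕ → ℕ, StrictMono φ ∧ (∀ k, p (φ k)) ∧ ∀ᵐ ω ∂μ, ∀ᶠ k in atTop, ω ∉ B k (φ k) := by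
  obtain ⟨φ, hφ, hB⟩ := extraction_forall_of_frequently h
  refine ⟨φ, hφ, fun k => (hB k).1, ae_eventually_notMem (ne_top_of_le_ne_top ?_
    (ENNReal.tsum_le_tsum fun k => (hB k).2.le))⟩
  simp [ENNReal.tsum_geometric]

lemma inv_ofReal_le_ofReal_of_one_le_mul {s t : ℝ} (hs : 0 < s) (h : 1 ≤ s * t) :
    (ENNReal.ofReal s)⁻¹ ≤ ENNReal.ofReal t := by
  rw [← ENNReal.ofReal_inv_of_pos hs]
  exact ENNReal.ofReal_le_ofReal ((inv_le_iff_one_le_mul₀' hs).2 h)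

lemma ofReal_le_inv_ofReal_of_mul_le_one {r t : ℝ} (hr : 0 ≤ r) (h : r * t ≤ 1) :
    ENNReal.ofReal t ≤ (ENNReal.ofReal r)⁻¹ := by
  rw [ENNReal.le_inv_iff_mul_le, mul_comm, ← ENNReal.ofReal_mul hr]
  exact ENNReal.ofReal_le_one.2 h

lemma tendsto_ofReal_inv_of_one_le_mul_of_mul_le_one {s r t : ℕ → ℝ} {L : ℝ≥0∞}
    (hs : ∀ k, 0 < s k) (hr : ∀ k, 0 ≤ r k)
    (hslim : Tendsto (fun k => ENNReal.ofReal (s k)) atTop (𝓝 L))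
    (hrlim : Tendsto (fun k => ENNReal.ofReal (r k)) atTop (𝓝 L))
    (h : ∀ᶠ k in atTop, 1 ≤ s k * t k ∧ r k * t k ≤ 1) :
    Tendsto (fun k => ENNReal.ofReal (t k)) atTop (𝓝 L⁻¹) :=
  tendsto_of_tendsto_of_tendsto_of_le_of_le' hslim.inv hrlim.inv
    (h.mono fun k hk => inv_ofReal_le_ofReal_of_one_le_mul (hs k) hk.1)
    (h.mono fun k hk => ofReal_le_inv_ofReal_of_mul_le_one (hr k) hk.2)

lemma liminf_rpow_mul_ne_zero_of_sSup_lt {G : ℝ → ℝ≥0∞} {s : ℝ} (hs : 0 ≤ s)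
    (h : sSup (ENNReal.ofReal '' {r : ℝ | 0 ≤ r ∧
      liminf (fun x => ENNReal.ofReal (x ^ r) * G x) atTop = 0}) < ENNReal.ofReal s) :
    liminf (fun x => ENNReal.ofReal (x ^ s) * G x) atTop ≠ 0 :=
  fun h0 => h.not_ge (le_sSup ⟨s, ⟨hs, h0⟩, rfl⟩)

section pmax

variable {Ω : Type*} {X : ℕ → Ω → ℝ} {m : ℕ}

lemma pmax_le_iff (hm : m ≠ 0) (ω : Ω) (x : ℝ) :
    pmax X m ω ≤ x ↔ ∀ k ∈ Finset.range m, X k ω ≤ x := by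
  simp [pmax, hm, Finset.sup'_le_iff]

lemma lt_pmax_iff (hm : m ≠ 0) (ω : Ω) (x : ℝ) :
    x < pmax X m ω ↔ ∃ k ∈ Finset.range m, x < X k ω := by
  simp [pmax, hm, Finset.lt_sup'_iff]

variable [MeasurableSpace Ω] {μ : Measure Ω}

lemma measure_pmax_gt_le (hident : ∀ n, IdentDistrib (X n) (X 0) μ μ) (hm : m ≠ 0) (x : ℝ) :
    μ {ω | pmax X m ω > x} ≤ m * μ {ω | X 0 ω > x} := by
  have hset : {ω | pmax X m ω > x} = ⋃ k ∈ Finset.range m, X k ⁻¹' Ioi x := by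
    ext ω; simp [lt_pmax_iff hm]
  rw [hset]
  have hk (k : ℕ) : μ (X k ⁻¹' Ioi x) = μ {ω | X 0 ω > x} :=
    (hident k).measure_mem_eq measurableSet_Ioi
  refine (measure_biUnion_finset_le _ _).trans_eq ?_
  simp [hk]

lemma measure_pmax_le_eq (hindep : iIndepFun X μ) (hident : ∀ n, IdentDistrib (X n) (X 0) μ μ)
    (hm : m ≠ 0) (x : ℝ) :
    μ {ω | pmax X m ω ≤ x} = μ {ω | X 0 ω ≤ x} ^ m := by
  have hset : {ω | pmax X m ω ≤ x} = ⋂ k ∈ Finset.range m, X k ⁻¹' Iic x := by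
    ext ω; simp [pmax_le_iff hm]
  rw [hset, hindep.meas_biInter fun k _ => ⟨Iic x, measurableSet_Iic, rfl⟩]
  have hk (k : ℕ) : μ (X k ⁻¹' Iic x) = μ {ω | X 0 ω ≤ x} :=
    (hident k).measure_mem_eq measurableSet_Iic
  simp [hk]

lemma measure_pmax_le_le_ofReal_exp [IsProbabilityMeasure μ] (hindep : iIndepFun X μ)
    (hident : ∀ n, IdentDistrib (X n) (X 0) μ μ) (hm : m ≠ 0) {y t : ℝ} (ht : 0 ≤ t)
    (h : ENNReal.ofReal t ≤ μ {ω | X 0 ω > y}) :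
    μ {ω | pmax X m ω ≤ y} ≤ ENNReal.ofReal (exp (-(m * t))) := by
  rw [measure_pmax_le_eq hindep hident hm, ← mul_neg, exp_nat_mul,
    ENNReal.ofReal_pow (exp_pos _).le]
  exact pow_le_pow_left' (measure_le_le_ofReal_exp_neg (hident 0).aemeasurable_fst ht h) m

end pmax

section logRatio

variable {Ω : Type*} {X : ℕ → Ω → ℝ} {m : ℕ} {ω : Ω}

noncomputable def logRatio (X : ℕ → Ω → ℝ) (m : ℕ) (ω : Ω) : ℝ := Log (pmax X m ω) / Log m

lemma one_le_mul_logRatio_of_rpow_lt {s : ℝ} (hs : 0 < s) (hm : exp 1 ≤ m)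
    (h : (m : ℝ) ^ s⁻¹ < pmax X m ω) : 1 ≤ s * logRatio X m ω := by
  rw [logRatio, mul_div_assoc', le_div_iff₀ (Log_pos _), one_mul]
  calc Log m = s * (s⁻¹ * Log m) := by field_simp
    _ ≤ s * Log (pmax X m ω) := by
      gcongr
      exact (mul_Log_le_Log_rpow hm _).trans (Log_mono h.le)

lemma mul_logRatio_le_one_of_pmax_le {r x : ℝ} (hr : 0 ≤ r) (hx : exp 1 ≤ x)
    (hxm : x ^ r ≤ m) (h : pmax X m ω ≤ x) : r * logRatio X m ω ≤ 1 := by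
  rw [logRatio, mul_div_assoc', div_le_one (Log_pos _)]
  calc r * Log (pmax X m ω) ≤ r * Log x := by gcongr; exact Log_mono h
    _ ≤ Log (x ^ r) := mul_Log_le_Log_rpow hx r
    _ ≤ Log m := Log_mono hxm

variable [MeasurableSpace Ω] {μ : Measure Ω}

lemma frequently_measure_one_lt_mul_logRatio_lt (hident : ∀ n, IdentDistrib (X n) (X 0) μ μ)
    {r : ℝ} (hr : 0 < r)
    (h0 : liminf (fun x => ENNReal.ofReal (x ^ r) * μ {ω | X 0 ω > x}) atTop = 0)
    {ε : ℝ≥0∞} (hε : 0 < ε) :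
    ∃ᶠ m : ℕ in atTop, μ {ω | 1 < r * logRatio X m ω} < ε := by
  have hsmall : ∃ᶠ x in atTop, ENNReal.ofReal (x ^ r) * μ {ω | X 0 ω > x} < ε / 2 :=
    frequently_lt_of_liminf_lt (by isBoundedDefault) (h0 ▸ ENNReal.half_pos hε.ne')
  have hlarge : ∀ᶠ x : ℝ in atTop, exp 1 ≤ x ∧ 1 ≤ x ^ r :=
    (eventually_ge_atTop _).and ((tendsto_rpow_atTop hr).eventually_ge_atTop 1)
  refine (tendsto_nat_ceil_atTop.comp (tendsto_rpow_atTop hr)).frequently_map _ ?_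
    (hsmall.and_eventually hlarge)
  rintro x ⟨hx, hxe, hx1⟩
  have hm : (⌈x ^ r⌉₊ : ℝ) ≤ 2 * x ^ r := by
    linarith [Nat.ceil_lt_add_one (zero_le_one.trans hx1)]
  calc μ {ω | 1 < r * logRatio X ⌈x ^ r⌉₊ ω} ≤ μ {ω | pmax X ⌈x ^ r⌉₊ ω > x} :=
        measure_mono fun ω hω => not_le.1 fun h =>
          (not_le.2 hω) (mul_logRatio_le_one_of_pmax_le hr.le hxe (Nat.le_ceil _) h)
    _ ≤ ⌈x ^ r⌉₊ * μ {ω | X 0 ω > x} :=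
        measure_pmax_gt_le hident (Nat.ceil_pos.2 (zero_lt_one.trans_le hx1)).ne' x
    _ ≤ 2 * (ENNReal.ofReal (x ^ r) * μ {ω | X 0 ω > x}) := by
        rw [← mul_assoc, ← ENNReal.ofReal_ofNat 2, ← ENNReal.ofReal_mul zero_le_two,
          ← ENNReal.ofReal_natCast]
        gcongr
    _ < 2 * (ε / 2) := ENNReal.mul_lt_mul_right two_ne_zero ENNReal.ofNat_ne_top hx
    _ = ε := ENNReal.mul_div_cancel two_ne_zero ENNReal.ofNat_ne_top

variable [IsProbabilityMeasure μ]

lemma tendsto_measure_pmax_le_rpow (hindep : iIndepFun X μ)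
    (hident : ∀ n, IdentDistrib (X n) (X 0) μ μ) {s s' : ℝ}
    (hs : liminf (fun x => ENNReal.ofReal (x ^ s) * μ {ω | X 0 ω > x}) atTop ≠ 0)
    (hss' : s < s') (hs' : 0 < s') :
    Tendsto (fun m : ℕ => μ {ω | pmax X m ω ≤ (m : ℝ) ^ s'⁻¹}) atTop (𝓝 0) := by
  obtain ⟨c, hc, htail⟩ := exists_mul_rpow_neg_le_of_liminf_ne_zero hs
  set θ := 1 - s / s'
  have hθ : 0 < θ := by have := (div_lt_one hs').2 hss'; simp only [θ]; linarith
  have hm_tendsto : Tendsto (fun m : ℕ => (m : ℝ)) atTop atTop := tendsto_natCast_atTop_atTop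
  have hbound : ∀ᶠ m : ℕ in atTop,
      μ {ω | pmax X m ω ≤ (m : ℝ) ^ s'⁻¹} ≤ ENNReal.ofReal (exp (-(c * (m : ℝ) ^ θ))) := by
    filter_upwards [((tendsto_rpow_atTop (inv_pos.2 hs')).comp hm_tendsto).eventually htail,
      eventually_gt_atTop 0] with m hm hm0
    have hrate : (m : ℝ) * (c * ((m : ℝ) ^ s'⁻¹) ^ (-s)) = c * (m : ℝ) ^ θ := by
      have hm0' : (0 : ℝ) < m := Nat.cast_pos.2 hm0
      have hexponent : s'⁻¹ * -s = θ - 1 := by simp only [θ]; field_simp; ring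
      rw [← rpow_mul hm0'.le, hexponent, rpow_sub_one hm0'.ne']
      field_simp
    rw [← hrate]
    exact measure_pmax_le_le_ofReal_exp hindep hident hm0.ne' (by positivity) hm
  have hlim : Tendsto (fun m : ℕ => ENNReal.ofReal (exp (-(c * (m : ℝ) ^ θ)))) atTop (𝓝 0) := by
    simpa using ENNReal.tendsto_ofReal (tendsto_exp_atBot.comp (tendsto_neg_atTop_atBot.comp
      (((tendsto_rpow_atTop hθ).comp hm_tendsto).const_mul_atTop hc)))
  exact tendsto_of_tendsto_of_tendsto_of_le_of_le' tendsto_const_nhds hlim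
    (Eventually.of_forall fun _ => bot_le) hbound

lemma tendsto_measure_mul_logRatio_lt_one (hindep : iIndepFun X μ)
    (hident : ∀ n, IdentDistrib (X n) (X 0) μ μ) {s s' : ℝ}
    (hs : liminf (fun x => ENNReal.ofReal (x ^ s) * μ {ω | X 0 ω > x}) atTop ≠ 0)
    (hss' : s < s') (hs' : 0 < s') :
    Tendsto (fun m : ℕ => μ {ω | s' * logRatio X m ω < 1}) atTop (𝓝 0) := by
  refine tendsto_of_tendsto_of_tendsto_of_le_of_le' tendsto_const_nhds
    (tendsto_measure_pmax_le_rpow hindep hident hs hss' hs')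
    (Eventually.of_forall fun _ => bot_le) ?_
  filter_upwards [tendsto_natCast_atTop_atTop.eventually_ge_atTop (exp 1)] with m hm
  exact measure_mono fun ω hω => not_lt.1 fun h =>
    (not_le.2 hω) (one_le_mul_logRatio_of_rpow_lt hs' hm h)

lemma frequently_measure_mul_logRatio_lt_one_or_one_lt_lt (hindep : iIndepFun X μ)
    (hident : ∀ n, IdentDistrib (X n) (X 0) μ μ) {r s s' : ℝ} (hr : 0 ≤ r)
    (h0 : liminf (fun x => ENNReal.ofReal (x ^ r) * μ {ω | X 0 ω > x}) atTop = 0)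
    (hs : liminf (fun x => ENNReal.ofReal (x ^ s) * μ {ω | X 0 ω > x}) atTop ≠ 0)
    (hss' : s < s') (hs' : 0 < s') {ε : ℝ≥0∞} (hε : 0 < ε) :
    ∃ᶠ m : ℕ in atTop,
      1 ≤ m ∧ μ {ω | s' * logRatio X m ω < 1 ∨ 1 < r * logRatio X m ω} < ε := by
  have hε2 : 0 < ε / 2 := ENNReal.half_pos hε.ne'
  have hupper : ∃ᶠ m : ℕ in atTop, μ {ω | 1 < r * logRatio X m ω} < ε / 2 := by
    rcases hr.eq_or_lt with rfl | hr
    · exact Frequently.of_forall fun m => by simpa [not_lt.2 zero_le_one] using hε2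
    · exact frequently_measure_one_lt_mul_logRatio_lt hident hr h0 hε2
  have hlower : ∀ᶠ m : ℕ in atTop, μ {ω | s' * logRatio X m ω < 1} < ε / 2 :=
    (tendsto_measure_mul_logRatio_lt_one hindep hident hs hss' hs').eventually (gt_mem_nhds hε2)
  refine (hupper.and_eventually (hlower.and (eventually_ge_atTop 1))).mono ?_
  rintro m ⟨hup, hlow, hm⟩
  refine ⟨hm, (measure_union_le _ _).trans_lt ?_⟩
  exact ENNReal.add_halves ε ▸ ENNReal.add_lt_add hlow hup

end logRatio

theorem stmt7_general {Ω : Type*} [MeasurableSpace Ω] (μ : Measure Ω) [IsProbabilityMeasure μ]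
    (X : ℕ → Ω → ℝ)
    (hindep : iIndepFun X μ)
    (hident : ∀ n, IdentDistrib (X n) (X 0) μ μ)
    (ρ₂ : ℝ≥0∞)
    (hρ₂ : ρ₂ = sSup (ENNReal.ofReal '' {r : ℝ | 0 ≤ r ∧
        Filter.liminf (fun x : ℝ => ENNReal.ofReal (x ^ r) * μ {ω | X 0 ω > x}) atTop = 0}))
    (hfin : ρ₂ < ⊤) :
    ∃ m : ℕ → ℕ, StrictMono m ∧ (∀ n, 1 ≤ m n) ∧
      ∀ᵐ ω ∂μ,
        Tendsto (fun n : ℕ => ENNReal.ofReal (Log (pmax X (m n) ω) / Log (m n))) atTop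
          (nhds ρ₂⁻¹) := by
  set S := {r : ℝ | 0 ≤ r ∧
    liminf (fun x : ℝ => ENNReal.ofReal (x ^ r) * μ {ω | X 0 ω > x}) atTop = 0}
  have hzero_mem : (0 : ℝ) ∈ S :=
    ⟨le_rfl, by simpa using (tendsto_measure_gt_atTop (hident 0).aemeasurable_fst).liminf_eq⟩
  obtain ⟨u, -, hu, huS⟩ := exists_seq_tendsto_sSup ⟨_, mem_image_of_mem _ hzero_mem⟩
    (OrderTop.bddAbove (ENNReal.ofReal '' S))
  choose r hrS hru using huS
  have hrlim : Tendsto (fun k => ENNReal.ofReal (r k)) atTop (𝓝 ρ₂) := by simpa [hru, hρ₂] using hu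
  set s' : ℕ → ℝ := fun k => ρ₂.toReal + 1 / (k + 1)
  have hs'_pos (k : ℕ) : 0 < s' k := by positivity
  have hs'ρ (k : ℕ) : ρ₂ < ENNReal.ofReal (s' k) := by
    rw [← ENNReal.ofReal_toReal hfin.ne, ENNReal.ofReal_lt_ofReal_iff']
    exact ⟨lt_add_of_pos_right _ Nat.one_div_pos_of_nat, hs'_pos k⟩
  have hs'lim : Tendsto (fun k => ENNReal.ofReal (s' k)) atTop (𝓝 ρ₂) := by
    rw [← ENNReal.ofReal_toReal hfin.ne]
    exact ENNReal.tendsto_ofReal <| by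
      simpa [s'] using tendsto_const_nhds.add (tendsto_one_div_add_atTop_nhds_zero_nat (𝕜 := ℝ))
  have hstage (k : ℕ) := frequently_measure_mul_logRatio_lt_one_or_one_lt_lt hindep hident
    (hrS k).1 (hrS k).2
    (liminf_rpow_mul_ne_zero_of_sSup_lt (hs'_pos (k + 1)).le (by rw [← hρ₂]; exact hs'ρ (k + 1)))
    (by simp only [s']; gcongr; simp) (hs'_pos k)
    (ENNReal.pow_pos (ENNReal.inv_pos.2 ENNReal.ofNat_ne_top : (0 : ℝ≥0∞) < 2⁻¹) k)
  obtain ⟨m, hm, hm1, hae⟩ := exists_strictMono_ae_eventually_notMem hstage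
  refine ⟨m, hm, hm1, ?_⟩
  filter_upwards [hae] with ω hω
  exact tendsto_ofReal_inv_of_one_le_mul_of_mul_le_one hs'_pos (fun k => (hrS k).1) hs'lim hrlim
    (hω.mono fun k hk => by rw [not_or, not_lt, not_lt] at hk; exact hk)

theorem stmt7 {Ω : Type*} [MeasurableSpace Ω] (μ : Measure Ω) [IsProbabilityMeasure μ]
    (X : ℕ → Ω → ℝ) (hmeas : ∀ n, Measurable (X n))
    (hindep : iIndepFun X μ)
    (hident : ∀ n, IdentDistrib (X n) (X 0) μ μ)
    (ρ₂ : ℝ≥0∞)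
    (hρ₂ : ρ₂ = sSup (ENNReal.ofReal '' {r : ℝ | 0 ≤ r ∧
        Filter.liminf (fun x : ℝ => ENNReal.ofReal (x ^ r) * μ {ω | X 0 ω > x}) atTop = 0}))
    (hfin : ρ₂ < ⊤) :
    ∃ m : ℕ → ℕ, StrictMono m ∧ (∀ n, 1 ≤ m n) ∧
      ∀ᵐ ω ∂μ,
        Tendsto (fun n : ℕ => ENNReal.ofReal (Log (pmax X (m n) ω) / Log (m n))) atTop
          (nhds ρ₂⁻¹) :=
  stmt7_general μ X hindep hident ρ₂ hρ₂ hfin
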